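/- arXiv:1711.11336 — 3 statements merged into one kernel-verified Lean document; each statement's English description precedes it below -/
import Mathlib

section
/- For an r-subset S with |S ∩ K| = ℓ and the unit vector |η_ℓ^j⟩ = |η_ℓ^j|^{−1/2} Σ_{(S′,y)∈η_ℓ^j} |S′,y⟩, one has ⟨α_S|η_ℓ^j⟩ = ((1−j)(N−r) + (2j−1)(k−ℓ)) / (√|η_ℓ^j| · √(N−r)), and ⟨α_S|η_{ℓ′}^j⟩ = 0 whenever |S∩K| ≠ ℓ′. -/
/-- The set `η_ℓ^j = {(S,y) ∈ V : |S ∩ K| = ℓ, |{y} ∩ K| = j}`. -/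
def etaSet (N r : ℕ) (K : Finset (Fin N)) (l j : ℕ) :
    Finset {p : Finset (Fin N) × Fin N // p.1.card = r ∧ p.2 ∉ p.1} :=
  Finset.univ.filter (fun p => (p.val.1 ∩ K).card = l ∧ ({p.val.2} ∩ K).card = j)

/-- The normalized uniform superposition `|η_ℓ^j⟩` over `η_ℓ^j`. -/
noncomputable def etaVec (N r : ℕ) (K : Finset (Fin N)) (l j : ℕ) :
    EuclideanSpace ℂ {p : Finset (Fin N) × Fin N // p.1.card = r ∧ p.2 ∉ p.1} :=
  WithLp.toLp 2 (fun p => if p ∈ etaSet N r K l j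
    then ((1 / Real.sqrt ((etaSet N r K l j).card) : ℝ) : ℂ) else 0)

/-- `|α_S⟩ = (N-r)^{-1/2} ∑_{y∉S} |S,y⟩`. -/
noncomputable def alphaVec (N r : ℕ) (S : Finset (Fin N)) :
    EuclideanSpace ℂ {p : Finset (Fin N) × Fin N // p.1.card = r ∧ p.2 ∉ p.1} :=
  WithLp.toLp 2 (fun p => if p.val.1 = S then ((1 / Real.sqrt (N - r) : ℝ) : ℂ) else 0)

lemma inner_alpha_eta (N r : ℕ) (K : Finset (Fin N)) (l j : ℕ) (S : Finset (Fin N)) :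
    inner (𝕜 := ℂ) (alphaVec N r S) (etaVec N r K l j)
      = (((((etaSet N r K l j).filter (fun p => p.val.1 = S)).card : ℝ)
        * (1 / Real.sqrt ((N:ℝ) - r)) * (1 / Real.sqrt ((etaSet N r K l j).card)) : ℝ) : ℂ) := by
  classical
  rw [PiLp.inner_apply]
  simp only [alphaVec, etaVec, RCLike.inner_apply, apply_ite (starRingEnd ℂ), map_zero,
    Complex.conj_ofReal, ite_mul, mul_ite, mul_zero, zero_mul]
  have h : ∀ p : {p : Finset (Fin N) × Fin N // p.1.card = r ∧ p.2 ∉ p.1},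
      (if p.val.1 = S then (if p ∈ etaSet N r K l j then
          ((1 / Real.sqrt ((etaSet N r K l j).card) : ℝ):ℂ) * ((1 / Real.sqrt ((N:ℝ) - r) : ℝ):ℂ) else 0) else 0)
      = (if p ∈ (etaSet N r K l j).filter (fun p => p.val.1 = S) then
          ((1 / Real.sqrt ((etaSet N r K l j).card) : ℝ):ℂ) * ((1 / Real.sqrt ((N:ℝ) - r) : ℝ):ℂ) else 0) := by
    intro p
    by_cases h1 : p.val.1 = S <;> by_cases h2 : p ∈ etaSet N r K l j <;>
      simp [Finset.mem_filter, h1, h2]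
  rw [Finset.sum_congr rfl (fun p _ => h p), Finset.sum_ite_mem, Finset.univ_inter,
    Finset.sum_const, nsmul_eq_mul]
  push_cast
  ring

lemma count_filter (N r : ℕ) (K : Finset (Fin N)) (l j : ℕ) (S : Finset (Fin N))
    (hS : S.card = r) (hl : (S ∩ K).card = l) :
    ((etaSet N r K l j).filter (fun p => p.val.1 = S)).card
      = (Finset.univ.filter (fun y : Fin N => y ∉ S ∧ ({y} ∩ K).card = j)).card := by
  classical
  apply Finset.card_bij (fun p _ => p.val.2)
  · intro p hp
    simp only [etaSet, Finset.mem_filter, Finset.mem_univ, true_and] at hp ⊢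
    obtain ⟨⟨hil, hij⟩, hps⟩ := hp
    exact ⟨hps ▸ p.property.2, hij⟩
  · intro p1 h1 p2 h2 heq
    simp only [etaSet, Finset.mem_filter] at h1 h2
    exact Subtype.ext (Prod.ext (h1.2.trans h2.2.symm) heq)
  · intro y hy
    simp only [Finset.mem_filter, Finset.mem_univ, true_and] at hy
    exact ⟨⟨(S, y), ⟨hS, hy.1⟩⟩, by
      simp only [etaSet, Finset.mem_filter, Finset.mem_univ, true_and]
      exact ⟨⟨hl, hy.2⟩, trivial⟩, rfl⟩

lemma count_zero (N r : ℕ) (K : Finset (Fin N)) (l j : ℕ) (S : Finset (Fin N))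
    (hl : (S ∩ K).card ≠ l) :
    ((etaSet N r K l j).filter (fun p => p.val.1 = S)) = ∅ := by
  classical
  ext p
  simp only [etaSet, Finset.mem_filter, Finset.mem_univ, true_and, Finset.notMem_empty,
    iff_false]
  rintro ⟨⟨h1, -⟩, h2⟩
  exact hl (h2 ▸ h1)

lemma countY_zero (N : ℕ) (K S : Finset (Fin N)) :
    (Finset.univ.filter (fun y : Fin N => y ∉ S ∧ ({y} ∩ K).card = 0)).card
      = N - (S ∪ K).card := by
  classical
  have : (Finset.univ.filter (fun y : Fin N => y ∉ S ∧ ({y} ∩ K).card = 0)) = (S ∪ K)ᶜ := by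
    ext y
    simp only [Finset.mem_filter, Finset.mem_univ, true_and, Finset.mem_compl,
      Finset.mem_union, Finset.card_eq_zero]
    constructor
    · rintro ⟨h1, h2⟩
      rintro (h | h)
      · exact h1 h
      · exact absurd (Finset.mem_inter.mpr ⟨Finset.mem_singleton_self y, h⟩) (by rw [h2]; simp)
    · intro h
      refine ⟨fun hy => h (Or.inl hy), ?_⟩
      rw [Finset.singleton_inter_of_notMem (fun hy => h (Or.inr hy))]
  rw [this, Finset.card_compl, Fintype.card_fin]

lemma countY_one (N : ℕ) (K S : Finset (Fin N)) :
    (Finset.univ.filter (fun y : Fin N => y ∉ S ∧ ({y} ∩ K).card = 1)).card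
      = (K \ S).card := by
  classical
  congr 1
  ext y
  simp only [Finset.mem_filter, Finset.mem_univ, true_and, Finset.mem_sdiff,
    Finset.card_eq_one]
  constructor
  · rintro ⟨hyS, hc⟩
    have : y ∈ K := by
      by_contra hy
      rw [Finset.singleton_inter_of_notMem hy] at hc
      obtain ⟨a, ha⟩ := hc
      exact absurd ha.symm (Finset.singleton_ne_empty a)
    exact ⟨this, hyS⟩
  · rintro ⟨hyK, hyS⟩
    exact ⟨hyS, by rw [Finset.singleton_inter_of_mem hyK]; exact ⟨y, rfl⟩⟩

/-- For an `r`-subset `S` with `|S ∩ K| = ℓ`: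
`⟨α_S|η_ℓ^j⟩ = ((1-j)(N-r) + (2j-1)(k-ℓ)) / (√|η_ℓ^j| √(N-r))`, and
`⟨α_S|η_{ℓ'}^j⟩ = 0` whenever `ℓ' ≠ |S ∩ K|`. -/
theorem stmt10 (N r k : ℕ) (hk : 0 < k) (hkr : k ≤ r) (hkN : k < N - r)
    (K : Finset (Fin N)) (hK : K.card = k)
    (S : Finset (Fin N)) (hS : S.card = r) :
    (∀ l j : ℕ, l ≤ k → j ≤ 1 → ¬(l = k ∧ j = 1) → (S ∩ K).card = l →
      inner (𝕜 := ℂ) (alphaVec N r S) (etaVec N r K l j)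
        = (((((1 : ℝ) - j) * ((N : ℝ) - r) + (2 * (j : ℝ) - 1) * ((k : ℝ) - l))
            / (Real.sqrt ((etaSet N r K l j).card) * Real.sqrt ((N : ℝ) - r)) : ℝ) : ℂ)) ∧
    (∀ l j : ℕ, l ≤ k → j ≤ 1 → ¬(l = k ∧ j = 1) → (S ∩ K).card ≠ l →
      inner (𝕜 := ℂ) (alphaVec N r S) (etaVec N r K l j) = 0) := by
  have hrkN : r + k < N := by omega
  constructor
  · intro l j hlk hj hnot hl
    have hlr : l ≤ r := hl ▸ (hS ▸ Finset.card_le_card (Finset.inter_subset_left))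
    rw [inner_alpha_eta, count_filter N r K l j S hS hl]
    have hcount : ((Finset.univ.filter (fun y : Fin N => y ∉ S ∧ ({y} ∩ K).card = j)).card : ℝ)
        = ((1 : ℝ) - j) * ((N : ℝ) - r) + (2 * (j : ℝ) - 1) * ((k : ℝ) - l) := by
      interval_cases j
      · rw [countY_zero]
        have hcard : (S ∪ K).card + (S ∩ K).card = S.card + K.card :=
          Finset.card_union_add_card_inter S K
        have hSK : (S ∪ K).card = r + k - l := by omega
        rw [hSK]
        have : r + k - l ≤ N := by omega
        push_cast [Nat.cast_sub this, Nat.cast_sub (show l ≤ r + k by omega)]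
        ring
      · rw [countY_one]
        have hcard : (K ∩ S).card + (K \ S).card = K.card :=
          Finset.card_inter_add_card_sdiff K S
        rw [Finset.inter_comm] at hcard
        have hKS : (K \ S).card = k - l := by omega
        rw [hKS, Nat.cast_sub hlk]
        ring
    have hcpos : 0 < (Finset.univ.filter (fun y : Fin N => y ∉ S ∧ ({y} ∩ K).card = j)).card := by
      interval_cases j
      · rw [countY_zero]
        have hcard : (S ∪ K).card + (S ∩ K).card = S.card + K.card :=
          Finset.card_union_add_card_inter S K
        omega
      · rw [countY_one]
        have hcard : (K ∩ S).card + (K \ S).card = K.card :=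
          Finset.card_inter_add_card_sdiff K S
        rw [Finset.inter_comm] at hcard
        have : l < k := by omega
        omega
    have hEpos : 0 < (etaSet N r K l j).card := by
      have := Finset.card_filter_le (etaSet N r K l j) (fun p => p.val.1 = S)
      rw [count_filter N r K l j S hS hl] at this
      omega
    have hE : Real.sqrt ((etaSet N r K l j).card) ≠ 0 := by
      positivity
    have hNr : Real.sqrt ((N:ℝ) - r) ≠ 0 := by
      have : (0:ℝ) < (N:ℝ) - r := by
        have : r < N := by omega
        exact sub_pos.mpr (by exact_mod_cast this)
      positivity
    rw [Complex.ofReal_inj, hcount]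
    simp only [one_div, div_eq_mul_inv, mul_inv]
    ring
  · intro l j hlk hj hnot hl
    rw [inner_alpha_eta, count_zero N r K l j S hl]
    simp
end

section
/- If {|ψ_n⟩} is an orthonormal eigenbasis of u^{t₂} with eigenvalues e^{i t₂ φ_n}, |m⟩ is a unit vector, and |λ⟩ is a unit eigenvector of u^{t₂}(I − 2|m⟩⟨m|) with eigenvalue e^{iλ} where e^{i(λ − t₂φ_n)} ≠ 1 for all n and ⟨m|λ⟩ ≠ 0, then Σ_n 2|⟨m|ψ_n⟩|² / (1 − e^{i(λ − t₂φ_n)}) = 1, and consequently Σ_n |⟨m|ψ_n⟩|² · sin(λ − t₂φ_n)/(1 − cos(λ − t₂φ_n)) = 0. -/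
open scoped Matrix
open Complex

/-!
Pairing the eigenvalue equation `U (λ - 2⟨m|λ⟩ m) = e^{il} λ` with `⟨ψ_a|`, where `U = u^{t₂}`
multiplies `ψ_a` by the phase `c_a = e^{i t₂ φ_a}`, gives
`⟨ψ_a|λ⟩ (1 - e^{il} / c_a) = 2 ⟨m|λ⟩ ⟨ψ_a|m⟩`. Substituting this into Parseval's identity
`∑_a ⟨m|ψ_a⟩⟨ψ_a|λ⟩ = ⟨m|λ⟩` and cancelling `⟨m|λ⟩ ≠ 0` gives the first identity. The second
is its imaginary part, because `Im (1 - e^{iθ})⁻¹ = sin θ / (2 (1 - cos θ))`.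
-/

namespace Matrix

variable {n : Type*} [Fintype n] [DecidableEq n]

theorem mulVec_pow_of_mulVec_eq_smul {R : Type*} [CommSemiring R] {A : Matrix n n R}
    {v : n → R} {c : R}
    (h : A *ᵥ v = c • v) (k : ℕ) : (A ^ k) *ᵥ v = c ^ k • v := by
  induction k with
  | zero => simp
  | succ k ih => rw [pow_succ, ← mulVec_mulVec, h, mulVec_smul, ih, smul_smul, pow_succ']

theorem star_dotProduct_mulVec_of_mulVec_eq_smul {U : Matrix n n ℂ} (hU : U ∈ unitaryGroup n ℂ)
    {v : n → ℂ} {c : ℂ} (hv : U *ᵥ v = c • v) (hc : ‖c‖ = 1) (w : n → ℂ) :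
    star v ⬝ᵥ (U *ᵥ w) = c * (star v ⬝ᵥ w) := by
  have hUv : v = c • (Uᴴ *ᵥ v) := by
    rw [← mulVec_smul, ← hv, mulVec_mulVec, ← star_eq_conjTranspose,
      mem_unitaryGroup_iff'.mp hU, one_mulVec]
  have hcc : c * star c = 1 := by
    rw [star_def, mul_conj, normSq_eq_norm_sq, hc]; norm_num
  calc star v ⬝ᵥ (U *ᵥ w) = star (Uᴴ *ᵥ v) ⬝ᵥ w := by
        rw [dotProduct_mulVec, star_mulVec, conjTranspose_conjTranspose]
    _ = c * star c * (star (Uᴴ *ᵥ v) ⬝ᵥ w) := by rw [hcc, one_mul]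
    _ = c * (star v ⬝ᵥ w) := by
        conv_rhs => rw [hUv]
        rw [star_smul, smul_dotProduct, smul_eq_mul, mul_assoc]

theorem sum_star_dotProduct_mul_dotProduct_of_orthonormal {R : Type*} [CommRing R] [StarRing R]
    {ψ : n → n → R} (hψ : ∀ a b, star (ψ a) ⬝ᵥ ψ b = if a = b then 1 else 0) (x y : n → R) :
    ∑ a, star (star (ψ a) ⬝ᵥ x) * (star (ψ a) ⬝ᵥ y) = star x ⬝ᵥ y := by
  set B : Matrix n n R := of fun a i => star (ψ a i)
  have hB : B ∈ unitaryGroup n R := by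
    rw [mem_unitaryGroup_iff]
    ext a b
    simpa [B, mul_apply, one_apply, dotProduct] using hψ a b
  calc ∑ a, star (star (ψ a) ⬝ᵥ x) * (star (ψ a) ⬝ᵥ y) = star (B *ᵥ x) ⬝ᵥ (B *ᵥ y) := rfl
    _ = star x ⬝ᵥ y := by
      rw [star_mulVec, ← dotProduct_mulVec, mulVec_mulVec, ← star_eq_conjTranspose,
        mem_unitaryGroup_iff'.mp hB, one_mulVec]

theorem sum_two_mul_norm_sq_div_one_sub_div_eq_one
    {U : Matrix n n ℂ} (hU : U ∈ unitaryGroup n ℂ) {ψ : n → n → ℂ}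
    (hψ : ∀ a b, star (ψ a) ⬝ᵥ ψ b = if a = b then 1 else 0)
    {c : n → ℂ} (hc : ∀ a, ‖c a‖ = 1) (heig : ∀ a, U *ᵥ ψ a = c a • ψ a)
    {m lam : n → ℂ} {e : ℂ} (hlam : U *ᵥ (lam - (2 : ℂ) • ((star m ⬝ᵥ lam) • m)) = e • lam)
    (hne : ∀ a, e ≠ c a) (hmlam : star m ⬝ᵥ lam ≠ 0) :
    ∑ a, 2 * ((‖star m ⬝ᵥ ψ a‖ ^ 2 : ℝ) : ℂ) / (1 - e / c a) = 1 := by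
  set μ := star m ⬝ᵥ lam
  have hc₀ : ∀ a, c a ≠ 0 := fun a => norm_ne_zero_iff.mp (hc a ▸ one_ne_zero)
  have hne' : ∀ a, 1 - e / c a ≠ 0 := fun a =>
    sub_ne_zero.mpr fun h => hne a ((div_eq_one_iff_eq (hc₀ a)).mp h.symm)
  have hcoeff : ∀ a, star (ψ a) ⬝ᵥ lam = 2 * μ * (star (ψ a) ⬝ᵥ m) / (1 - e / c a) := by
    intro a
    have h := congrArg (star (ψ a) ⬝ᵥ ·) hlam
    simp only [star_dotProduct_mulVec_of_mulVec_eq_smul hU (heig a) (hc a), dotProduct_sub,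
      dotProduct_smul, smul_eq_mul] at h
    rw [eq_div_iff (hne' a)]
    field_simp [hc₀ a]
    linear_combination h
  have hnorm : ∀ a, ((‖star m ⬝ᵥ ψ a‖ ^ 2 : ℝ) : ℂ)
      = star (star (ψ a) ⬝ᵥ m) * (star (ψ a) ⬝ᵥ m) := fun a => by
    rw [star_dotProduct, ofReal_pow, ← mul_conj', star_def, conj_conj]
  apply mul_left_cancel₀ hmlam
  rw [Finset.mul_sum, mul_one]
  calc ∑ a, μ * (2 * ((‖star m ⬝ᵥ ψ a‖ ^ 2 : ℝ) : ℂ) / (1 - e / c a))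
      = ∑ a, star (star (ψ a) ⬝ᵥ m) * (star (ψ a) ⬝ᵥ lam) := by
        refine Finset.sum_congr rfl fun a _ => ?_
        rw [hnorm, hcoeff]
        ring
    _ = μ := sum_star_dotProduct_mul_dotProduct_of_orthonormal hψ m lam

end Matrix

theorem Complex.im_inv_one_sub_exp_mul_I (θ : ℝ) :
    ((1 - exp (θ * I))⁻¹).im = Real.sin θ / (2 * (1 - Real.cos θ)) := by
  have hre : (1 - exp (θ * I)).re = 1 - Real.cos θ := by simp [exp_ofReal_mul_I_re]
  have him : (1 - exp (θ * I)).im = -Real.sin θ := by simp [exp_ofReal_mul_I_im]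
  rw [inv_im, normSq_apply, hre, him, neg_neg]
  congr 1
  nlinarith [Real.sin_sq_add_cos_sq θ]

theorem Complex.im_two_mul_ofReal_div_one_sub_exp_mul_I (r θ : ℝ) :
    (2 * (r : ℂ) / (1 - exp (θ * I))).im = r * Real.sin θ / (1 - Real.cos θ) := by
  rw [div_eq_mul_inv, ← ofReal_ofNat, ← ofReal_mul, im_ofReal_mul, im_inv_one_sub_exp_mul_I,
    mul_div_assoc', mul_assoc, mul_div_mul_left _ _ two_ne_zero]

theorem stmt17_general {n : Type*} [Fintype n] [DecidableEq n]
    (u : Matrix n n ℂ) (hu : u ∈ Matrix.unitaryGroup n ℂ)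
    (t₂ : ℕ)
    (φ : n → ℝ) (ψ : n → n → ℂ)
    (hortho : ∀ a b : n, ∑ i, starRingEnd ℂ (ψ a i) * ψ b i
      = if a = b then 1 else 0)
    (heig : ∀ a : n, u.mulVec (ψ a) = Complex.exp (φ a * Complex.I) • ψ a)
    (m lam : n → ℂ)
    (l : ℝ)
    (hlam : (u ^ t₂).mulVec
        (lam - (2 : ℂ) • ((∑ i, starRingEnd ℂ (m i) * lam i) • m))
      = Complex.exp (l * Complex.I) • lam)
    (hne : ∀ a : n, Complex.exp ((l - t₂ * φ a) * Complex.I) ≠ 1)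
    (hmlam : (∑ i, starRingEnd ℂ (m i) * lam i) ≠ 0) :
    (∑ a : n, 2 * (‖∑ i, starRingEnd ℂ (m i) * ψ a i‖ ^ 2 : ℝ)
        / (1 - Complex.exp ((l - t₂ * φ a) * Complex.I)) = 1) ∧
    (∑ a : n, ‖∑ i, starRingEnd ℂ (m i) * ψ a i‖ ^ 2
        * Real.sin (l - t₂ * φ a) / (1 - Real.cos (l - t₂ * φ a)) = 0) := by
  have hquot : ∀ a, exp (l * I) / exp (φ a * I) ^ t₂ = exp ((l - t₂ * φ a) * I) := fun a => by
    rw [← exp_nat_mul, ← exp_sub]; ring_nf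
  have hsecular := Matrix.sum_two_mul_norm_sq_div_one_sub_div_eq_one (pow_mem hu t₂) hortho
    (fun a => by rw [norm_pow, norm_exp_ofReal_mul_I, one_pow])
    (fun a => Matrix.mulVec_pow_of_mulVec_eq_smul (heig a) t₂) hlam
    (fun a h => hne a (by rw [← hquot, h, div_self (pow_ne_zero _ (exp_ne_zero _))])) hmlam
  simp only [hquot] at hsecular
  refine ⟨hsecular, ?_⟩
  have him := congrArg Complex.im hsecular
  rw [im_sum, one_im] at him
  rw [← him]
  refine Finset.sum_congr rfl fun a _ => ?_
  have hθ : ((l : ℂ) - t₂ * φ a) = ((l - t₂ * φ a : ℝ) : ℂ) := by push_cast; rfl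
  rw [hθ, im_two_mul_ofReal_div_one_sub_exp_mul_I]
  rfl

/-- If `{|ψ_n⟩}` is an orthonormal eigenbasis of the unitary `u` with
`u|ψ_n⟩ = e^{iφ_n}|ψ_n⟩`, `|m⟩` is a unit vector, and `|λ⟩` is a unit
eigenvector of `u^{t₂}(I - 2|m⟩⟨m|)` with eigenvalue `e^{iλ}` where
`e^{i(λ - t₂φ_n)} ≠ 1` for all `n` and `⟨m|λ⟩ ≠ 0`, then
`∑_n 2|⟨m|ψ_n⟩|²/(1 - e^{i(λ - t₂φ_n)}) = 1` and consequently
`∑_n |⟨m|ψ_n⟩|² sin(λ - t₂φ_n)/(1 - cos(λ - t₂φ_n)) = 0`. -/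
theorem stmt17 {n : Type*} [Fintype n] [DecidableEq n]
    (u : Matrix n n ℂ) (hu : u ∈ Matrix.unitaryGroup n ℂ)
    (t₂ : ℕ) (ht₂ : 0 < t₂)
    (φ : n → ℝ) (ψ : n → n → ℂ)
    (hortho : ∀ a b : n, ∑ i, starRingEnd ℂ (ψ a i) * ψ b i
      = if a = b then 1 else 0)
    (heig : ∀ a : n, u.mulVec (ψ a) = Complex.exp (φ a * Complex.I) • ψ a)
    (m lam : n → ℂ)
    (hm : ∑ i, starRingEnd ℂ (m i) * m i = 1)
    (hlamnorm : ∑ i, starRingEnd ℂ (lam i) * lam i = 1)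
    (l : ℝ)
    (hlam : (u ^ t₂).mulVec
        (lam - (2 : ℂ) • ((∑ i, starRingEnd ℂ (m i) * lam i) • m))
      = Complex.exp (l * Complex.I) • lam)
    (hne : ∀ a : n, Complex.exp ((l - t₂ * φ a) * Complex.I) ≠ 1)
    (hmlam : (∑ i, starRingEnd ℂ (m i) * lam i) ≠ 0) :
    (∑ a : n, 2 * (‖∑ i, starRingEnd ℂ (m i) * ψ a i‖ ^ 2 : ℝ)
        / (1 - Complex.exp ((l - t₂ * φ a) * Complex.I)) = 1) ∧
    (∑ a : n, ‖∑ i, starRingEnd ℂ (m i) * ψ a i‖ ^ 2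
        * Real.sin (l - t₂ * φ a) / (1 - Real.cos (l - t₂ * φ a)) = 0) :=
  stmt17_general u hu t₂ φ ψ hortho heig m lam l hlam hne hmlam
end

section
/- With ⟨k,0|ψ_0⟩ = Π_{i=0}^{k−1} √((r−i)/(N−i)) and ⟨k,0|ψ_k⟩ = (1/√2)·√(Π_{i=0}^{k−1}(N−r−i) / Π_{i=k−1}^{2k−2}(N−i)), one has ⟨k,0|ψ_0⟩² = Π_{i=0}^{k−1}(r−i)/(N−i) = Θ((r/N)^k) as N → ∞ with r = ⌊N^{k/(k+1)}⌋, and ⟨k,0|ψ_k⟩² → 1/2 as N → ∞. -/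
/-!
Since `r → ∞` and `r/N ≤ N^{-1/(k+1)} → 0`, each factor `(r - i)/(N - i)` is asymptotically
equivalent to `r/N`, so the product is equivalent to `(r/N)^k`. In `⟨k,0|ψ_k⟩²` every factor
`N - r - i` and `N - i` is equivalent to `N` because `r = o(N)`; numerator and denominator both
have `k` factors, so their ratio tends to `1`.
-/

open Filter

/-- `r(N) = ⌊N^{k/(k+1)}⌋`. -/
noncomputable def rOf (k N : ℕ) : ℕ := ⌊(N : ℝ) ^ ((k : ℝ) / (k + 1))⌋₊

open Asymptotics Finset Topology

section Equivalents

variable {α : Type*} {l : Filter α}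

lemma isEquivalent_sub_const_of_tendsto_atTop {f : α → ℝ} (hf : Tendsto f l atTop) (c : ℝ) :
    (fun x => f x - c) ~[l] f := by
  simpa only [sub_eq_add_neg] using
    IsEquivalent.refl.add_const_of_norm_tendsto_atTop (c := -c) (tendsto_abs_atTop_atTop.comp hf)

lemma prod_sub_div_sub_isEquivalent {r N : α → ℝ} (hr : Tendsto r l atTop)
    (hN : Tendsto N l atTop) (k : ℕ) :
    (fun x => ∏ i ∈ range k, (r x - i) / (N x - i)) ~[l] fun x => (r x / N x) ^ k := by
  have h := IsEquivalent.finsetProd (s := range k) fun i _ =>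
    (isEquivalent_sub_const_of_tendsto_atTop hr (i : ℝ)).div
      (isEquivalent_sub_const_of_tendsto_atTop hN (i : ℝ))
  simpa only [Pi.div_apply, prod_const, card_range] using h

lemma tendsto_prod_sub_sub_div_prod_sub {r N : α → ℝ} (hN : Tendsto N l atTop)
    (hrN : Tendsto (fun x => r x / N x) l (𝓝 0)) {s t : Finset ℕ} (hst : #s = #t) :
    Tendsto (fun x => (∏ i ∈ s, (N x - r x - i)) / ∏ i ∈ t, (N x - i)) l (𝓝 1) := by
  have hN0 : ∀ᶠ x in l, N x ≠ 0 := hN.eventually_ne_atTop 0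
  have hr : r =o[l] N :=
    (isLittleO_iff_tendsto' (hN0.mono fun x hx h => absurd h hx)).2 hrN
  have hnum : ∀ i ∈ s, (fun x => N x - r x - i) ~[l] N := fun i _ => by
    have hi : (fun _ => (i : ℝ)) =o[l] N :=
      isLittleO_const_left.2 (Or.inr (tendsto_abs_atTop_atTop.comp hN))
    simpa only [sub_sub, Pi.sub_def] using IsEquivalent.refl.sub_isLittleO (hr.add hi)
  have hden : ∀ i ∈ t, (fun x => N x - i) ~[l] N := fun i _ =>
    isEquivalent_sub_const_of_tendsto_atTop hN i
  have hratio := (IsEquivalent.finsetProd hnum).div (IsEquivalent.finsetProd hden)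
  simp only [prod_const, hst] at hratio
  refine (hratio.trans_eventuallyEq ?_).tendsto_const
  filter_upwards [hN0] with x hx
  simp [hx]

end Equivalents

section FloorPower

variable {p : ℝ}

lemma tendsto_natFloor_rpow_atTop (hp : 0 < p) :
    Tendsto (fun N : ℕ => (⌊(N : ℝ) ^ p⌋₊ : ℝ)) atTop atTop :=
  tendsto_natCast_atTop_atTop.comp <| tendsto_nat_floor_atTop.comp <|
    (tendsto_rpow_atTop hp).comp tendsto_natCast_atTop_atTop

lemma tendsto_natFloor_rpow_div_self (hp : p < 1) :
    Tendsto (fun N : ℕ => (⌊(N : ℝ) ^ p⌋₊ : ℝ) / N) atTop (𝓝 0) := by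
  have hdecay : Tendsto (fun N : ℕ => (N : ℝ) ^ (-(1 - p))) atTop (𝓝 0) :=
    (tendsto_rpow_neg_atTop (by linarith)).comp tendsto_natCast_atTop_atTop
  refine tendsto_of_tendsto_of_tendsto_of_le_of_le' tendsto_const_nhds hdecay
    (Eventually.of_forall fun N => by positivity) ?_
  filter_upwards [eventually_gt_atTop 0] with N hN
  have hN0 : (0 : ℝ) < N := by exact_mod_cast hN
  calc (⌊(N : ℝ) ^ p⌋₊ : ℝ) / N ≤ (N : ℝ) ^ p / (N : ℝ) ^ (1 : ℝ) := by
        rw [Real.rpow_one]; gcongr; exact Nat.floor_le (by positivity)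
    _ = (N : ℝ) ^ (-(1 - p)) := by rw [← Real.rpow_sub hN0]; ring_nf

end FloorPower

/-- With `⟨k,0|ψ_0⟩ = ∏_{i<k} √((r-i)/(N-i))` and
`⟨k,0|ψ_k⟩² = (1/2) ∏_{i<k}(N-r-i) / ∏_{i=k-1}^{2k-2}(N-i)`, where
`r = ⌊N^{k/(k+1)}⌋`: eventually `⟨k,0|ψ_0⟩² = ∏_{i<k}(r-i)/(N-i)`, this
quantity is `Θ((r/N)^k)` as `N → ∞`, and `⟨k,0|ψ_k⟩² → 1/2`. -/
theorem stmt19 (k : ℕ) (hk : 0 < k) :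
    (∀ᶠ N : ℕ in atTop,
      (∏ i ∈ Finset.range k,
          Real.sqrt (((rOf k N : ℝ) - i) / ((N : ℝ) - i))) ^ 2
        = ∏ i ∈ Finset.range k, ((rOf k N : ℝ) - i) / ((N : ℝ) - i)) ∧
    (fun N : ℕ => ∏ i ∈ Finset.range k, ((rOf k N : ℝ) - i) / ((N : ℝ) - i))
      =Θ[atTop] (fun N : ℕ => ((rOf k N : ℝ) / (N : ℝ)) ^ k) ∧
    Tendsto
      (fun N : ℕ =>
        (1 / 2 : ℝ) * (∏ i ∈ Finset.range k, ((N : ℝ) - (rOf k N : ℝ) - i))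
          / (∏ i ∈ Finset.Icc (k - 1) (2 * k - 2), ((N : ℝ) - i)))
      atTop (nhds (1 / 2)) := by
  have hk' : (0 : ℝ) < k := by exact_mod_cast hk
  have hr : Tendsto (fun N : ℕ => (rOf k N : ℝ)) atTop atTop :=
    tendsto_natFloor_rpow_atTop (by positivity)
  have hrN : Tendsto (fun N : ℕ => (rOf k N : ℝ) / N) atTop (𝓝 0) :=
    tendsto_natFloor_rpow_div_self ((div_lt_one (by positivity)).2 (by linarith))
  have hN : Tendsto (fun N : ℕ => (N : ℝ)) atTop atTop := tendsto_natCast_atTop_atTop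
  refine ⟨?_, (prod_sub_div_sub_isEquivalent hr hN k).isTheta, ?_⟩
  · filter_upwards [hr.eventually_ge_atTop (k : ℝ), hN.eventually_ge_atTop (k : ℝ)]
      with N hrk hNk
    have hnonneg : ∀ i ∈ range k, 0 ≤ ((rOf k N : ℝ) - i) / ((N : ℝ) - i) := fun i hi => by
      have hik : (i : ℝ) < k := by exact_mod_cast mem_range.1 hi
      exact div_nonneg (by linarith) (by linarith)
    rw [← Real.sqrt_prod _ hnonneg, Real.sq_sqrt (prod_nonneg hnonneg)]
  · have hcard : #(range k) = #(Icc (k - 1) (2 * k - 2)) := by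
      rw [card_range, Nat.card_Icc]; omega
    simpa [mul_div_assoc] using
      (tendsto_prod_sub_sub_div_prod_sub hN hrN hcard).const_mul (1 / 2 : ℝ)
end
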